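/- arXiv:1211.5933 — 3 statements merged into one kernel-verified Lean document; each statement's English description precedes it below -/
import Mathlib

section
/- Let G be a finite prereduced graph, let P = (v₀, v₁, …, v_p) be a chordless (induced) path in G of length p, and let u be a vertex adjacent to every inner vertex v₁, …, v_{p−1} of P. Then: (1) if p ≥ 4 and u is also adjacent to v₀ and v_p, then N[v_ℓ] ⊆ N[u] for every 2 ≤ ℓ ≤ p−2; (2) if p ≥ 3 and u is also adjacent to v₀ and v_p, then N[v_ℓ] ∩ N[v_{ℓ+1}] ⊆ N[u] for every 1 ≤ ℓ ≤ p−2; (3) if p ≥ 4, then N[v_ℓ] \ (N(v₁) ∪ N(v_{p−1})) ⊆ N[u] for every 2 ≤ ℓ ≤ p−2. -/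
/-- A graph is an interval graph if each vertex can be assigned a (nonempty) closed real
interval such that two distinct vertices are adjacent iff their intervals intersect. -/
def IsIntervalGraph {V : Type*} (G : SimpleGraph V) : Prop :=
  ∃ f : V → Set ℝ,
    (∀ v, ∃ a b : ℝ, a ≤ b ∧ f v = Set.Icc a b) ∧
    ∀ u v : V, u ≠ v → (G.Adj u v ↔ (f u ∩ f v).Nonempty)

/-- A hole is an induced (chordless) cycle on at least 4 vertices, identified
with its vertex set. -/
def IsHole {V : Type*} (G : SimpleGraph V) (H : Set V) : Prop :=
  ∃ m : ℕ, 4 ≤ m ∧ ∃ f : ZMod m → V,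
    Function.Injective f ∧ Set.range f = H ∧
      ∀ i j : ZMod m, G.Adj (f i) (f j) ↔ (j = i + 1 ∨ i = j + 1)

/-- A minimal forbidden set: the induced subgraph is not interval, but every
proper subset induces an interval graph. -/
def IsMinimalForbidden {V : Type*} (G : SimpleGraph V) (X : Set V) : Prop :=
  ¬ IsIntervalGraph (G.induce X) ∧ ∀ Y : Set V, Y ⊂ X → IsIntervalGraph (G.induce Y)

/-- A graph is prereduced if it has no minimal forbidden set of at most 10 vertices. -/
def Prereduced {V : Type*} (G : SimpleGraph V) : Prop :=
  ∀ X : Set V, X.ncard ≤ 10 → ¬ IsMinimalForbidden G X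

/-- A module: any two vertices of `M` have exactly the same neighbors outside `M`. -/
def IsGraphModule {V : Type*} (G : SimpleGraph V) (M : Set V) : Prop :=
  ∀ u ∈ M, ∀ v ∈ M, ∀ x ∉ M, (G.Adj u x ↔ G.Adj v x)

/-- A graph is reduced if it is prereduced and every nontrivial module induces a clique. -/
def Reduced {V : Type*} [Fintype V] (G : SimpleGraph V) : Prop :=
  Prereduced G ∧
    ∀ M : Set V, IsGraphModule G M → 1 < M.ncard → M.ncard < Fintype.card V →
      G.IsClique M

/-- Closed neighborhood `N[v]`. -/
def closedNbhd {V : Type*} (G : SimpleGraph V) (v : V) : Set V :=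
  insert v (G.neighborSet v)

/-- Closed neighborhood of a set, `N[U] = ⋃ v ∈ U, N[v]`. -/
def closedNbhdSet {V : Type*} (G : SimpleGraph V) (U : Set V) : Set V :=
  ⋃ v ∈ U, closedNbhd G v

/-- The set of common neighbors of a vertex set `X`. -/
def commonNbrs {V : Type*} (G : SimpleGraph V) (X : Set V) : Set V :=
  {v | ∀ x ∈ X, G.Adj v x}

/-- `P` induces a chordless path: it can be enumerated so that adjacency holds
exactly between consecutive vertices. -/
def IsInducedPath {V : Type*} (G : SimpleGraph V) (P : Set V) : Prop :=
  ∃ n : ℕ, ∃ f : Fin (n + 1) → V, Function.Injective f ∧ Set.range f = P ∧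
    ∀ i j : Fin (n + 1), G.Adj (f i) (f j) ↔ (i.val + 1 = j.val ∨ j.val + 1 = i.val)

/-- A shallow terminal: a vertex `s` contained in a minimal forbidden set `W` that is
not a hole, such that `W \ N[s]` induces a chordless path. -/
def ShallowTerminal {V : Type*} (G : SimpleGraph V) (s : V) : Prop :=
  ∃ W : Set V, IsMinimalForbidden G W ∧ s ∈ W ∧ ¬ IsHole G W ∧
    IsInducedPath G (W \ closedNbhd G s)

/-- A hole cover: a vertex set intersecting every hole. -/
def HoleCover {V : Type*} (G : SimpleGraph V) (C : Set V) : Prop :=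
  ∀ H : Set V, IsHole G H → (C ∩ H).Nonempty

/-- A minimal hole cover: a hole cover no proper subset of which is a hole cover. -/
def MinimalHoleCover {V : Type*} (G : SimpleGraph V) (C : Set V) : Prop :=
  HoleCover G C ∧ ∀ C' : Set V, C' ⊂ C → ¬ HoleCover G C'

/-- An interval deletion set: a vertex set whose removal leaves an interval graph. -/
def IntervalDeletionSet {V : Type*} (G : SimpleGraph V) (Q : Set V) : Prop :=
  IsIntervalGraph (G.induce Qᶜ)

/-- A minimum interval deletion set. -/
def MinIntervalDeletionSet {V : Type*} (G : SimpleGraph V) (Q : Set V) : Prop :=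
  IntervalDeletionSet G Q ∧
    ∀ Q' : Set V, IntervalDeletionSet G Q' → Q.ncard ≤ Q'.ncard

/-- Two holes are congenial if each is contained in the closed neighborhood of the other. -/
def Congenial {V : Type*} (G : SimpleGraph V) (H₁ H₂ : Set V) : Prop :=
  H₁ ⊆ closedNbhdSet G H₂ ∧ H₂ ⊆ closedNbhdSet G H₁

/-- The graph `G − S`: edges of `G` with both endpoints outside `S`
(vertices of `S` become isolated). -/
def deleteSet {V : Type*} (G : SimpleGraph V) (S : Set V) : SimpleGraph V where
  Adj u v := G.Adj u v ∧ u ∉ S ∧ v ∉ S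
  symm := ⟨fun u v h => ⟨h.1.symm, h.2.2, h.2.1⟩⟩
  loopless := ⟨fun v h => G.loopless.irrefl v h.1⟩

/-!
Every set of at most ten vertices of a prereduced graph induces an interval graph, so each claim
reduces to the impossibility of a configuration of at most seven real intervals. Let `x` be a
neighbour of `v_ℓ` outside `N[u]`, and let `v_i`, `v_j` (`i < ℓ < j`) be the last non-neighbours of
`x` before and the first after `v_ℓ`. If `j ≥ i + 3`, the interval of `u` covers the gap between the
disjoint intervals of `v_i` and `v_j`, and the interval of `x`, meeting those of `v_{i+1}` and
`v_{j-1}`, has to cross it. If `j = i + 2`, `x` sees `v_ℓ` but not `v_{ℓ ± 1}`, and the path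
`v_{ℓ-2}, …, v_{ℓ+2}` pins the interval of `x` inside that gap again.
-/

section

theorem Nat.exists_not_and_succ {P : ℕ → Prop} {a b : ℕ} (hab : a ≤ b) (ha : ¬ P a) (hb : P b) :
    ∃ i, a ≤ i ∧ i < b ∧ ¬ P i ∧ P (i + 1) := by
  induction b, hab using Nat.le_induction with
  | base => exact absurd hb ha
  | succ b hab ih =>
    by_cases hPb : P b
    · obtain ⟨i, hai, hib, hPi, hPi'⟩ := ih hPb
      exact ⟨i, hai, hib.trans b.lt_succ_self, hPi, hPi'⟩
    · exact ⟨b, hab, b.lt_succ_self, hPb, hb⟩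

variable {V : Type*} {G : SimpleGraph V}

def IsIntervalModelOn (G : SimpleGraph V) (S : Set V) (l r : V → ℝ) : Prop :=
  ∀ a ∈ S, l a ≤ r a ∧ ∀ b ∈ S, a ≠ b → (G.Adj a b ↔ l a ≤ r b ∧ l b ≤ r a)

namespace IsIntervalModelOn

variable {S : Set V} {l r : V → ℝ} {a b : V}

theorem le (h : IsIntervalModelOn G S l r) (a : V) (ha : a ∈ S := by simp) : l a ≤ r a :=
  (h a ha).1

theorem le_of_adj (h : IsIntervalModelOn G S l r) (hab : G.Adj a b) (ha : a ∈ S := by simp)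
    (hb : b ∈ S := by simp) : l a ≤ r b ∧ l b ≤ r a :=
  ((h a ha).2 b hb hab.ne).1 hab

theorem lt_or_lt_of_not_adj (h : IsIntervalModelOn G S l r) (hne : a ≠ b) (hab : ¬ G.Adj a b)
    (ha : a ∈ S := by simp) (hb : b ∈ S := by simp) : r b < l a ∨ r a < l b := by
  rw [(h a ha).2 b hb hne, not_and_or, not_le, not_le] at hab
  exact hab

end IsIntervalModelOn

theorem IsIntervalGraph.exists_isIntervalModelOn {S : Set V} (hS : IsIntervalGraph (G.induce S)) :
    ∃ l r : V → ℝ, IsIntervalModelOn G S l r := by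
  classical
  obtain ⟨f, hf, hadj⟩ := hS
  choose L R hLR hLR' using hf
  refine ⟨fun a => if ha : a ∈ S then L ⟨a, ha⟩ else 0,
    fun a => if ha : a ∈ S then R ⟨a, ha⟩ else 0, fun a ha => ⟨?_, fun b hb hne => ?_⟩⟩
  · simpa [ha] using hLR ⟨a, ha⟩
  · have := hadj ⟨a, ha⟩ ⟨b, hb⟩ (by simpa using hne)
    rw [hLR', hLR', Set.Icc_inter_Icc, Set.nonempty_Icc] at this
    simp only [SimpleGraph.comap_adj, Function.Embedding.subtype_apply, sup_le_iff,
      le_inf_iff] at this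
    simp only [ha, hb, dite_true, this, hLR, true_and, and_true]
    exact and_comm

theorem Prereduced.isIntervalGraph_induce (hG : Prereduced G) (S : Finset V) (hS : S.card ≤ 10) :
    IsIntervalGraph (G.induce (S : Set V)) := by
  by_contra hSint
  let F : Set (Set V) := {Y | Y ⊆ S ∧ ¬ IsIntervalGraph (G.induce Y)}
  have hF : F.Finite := S.finite_toSet.finite_subsets.subset fun Y hY => hY.1
  obtain ⟨Y, -, hY⟩ := hF.exists_le_minimal (show (S : Set V) ∈ F from ⟨subset_rfl, hSint⟩)
  refine hG Y ?_ ⟨hY.prop.2, fun Z hZY => ?_⟩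
  · calc Y.ncard ≤ (S : Set V).ncard := Set.ncard_le_ncard hY.prop.1 S.finite_toSet
      _ = S.card := Set.ncard_coe_finset S
      _ ≤ 10 := hS
  · by_contra hZ
    exact hY.not_lt ⟨hZY.subset.trans hY.prop.1, hZ⟩ hZY

theorem Prereduced.exists_isIntervalModelOn (hG : Prereduced G) (s : List V) (hs : s.length ≤ 10) :
    ∃ l r : V → ℝ, IsIntervalModelOn G {a | a ∈ s} l r := by
  classical
  have := (hG.isIntervalGraph_induce s.toFinset ((List.toFinset_card_le s).trans hs))
  simpa using this.exists_isIntervalModelOn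

theorem Prereduced.mem_closedNbhd_of_adj_ends (hG : Prereduced G) {u x a b c d : V}
    (hab : G.Adj a b) (hcd : G.Adj c d) (hua : G.Adj u a) (hud : G.Adj u d)
    (hxb : G.Adj x b) (hxc : G.Adj x c)
    (hac : ¬ G.Adj a c) (hbd : ¬ G.Adj b d) (had : ¬ G.Adj a d) : x ∈ closedNbhd G u := by
  by_contra hx
  obtain ⟨hxu, hux⟩ := not_or.mp hx
  obtain ⟨l, r, hm⟩ := hG.exists_isIntervalModelOn [u, x, a, b, c, d] (by simp)
  have := hm.le_of_adj hab
  have := hm.le_of_adj hcd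
  have := hm.le_of_adj hua
  have := hm.le_of_adj hud
  have := hm.le_of_adj hxb
  have := hm.le_of_adj hxc
  have sep_ac := hm.lt_or_lt_of_not_adj (by rintro rfl; exact had hcd) hac
  have sep_bd := hm.lt_or_lt_of_not_adj (by rintro rfl; exact had hab) hbd
  have sep_ad := hm.lt_or_lt_of_not_adj (by rintro rfl; exact hac hcd.symm) had
  have sep_xu := hm.lt_or_lt_of_not_adj hxu (fun h => hux h.symm)
  rcases sep_ac with _ | _ <;> rcases sep_bd with _ | _ <;> rcases sep_ad with _ | _ <;>
    rcases sep_xu with _ | _ <;>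
    linarith [hm.le u, hm.le x, hm.le a, hm.le b, hm.le c, hm.le d]

/-- Since `a` and `e` meet `b` and `d` but not `c`, the interval of `c` does not stick out beyond
those of `b` and `d`; so the interval of `x`, meeting that of `c` but neither of `b` and `d`, lies
in the gap between them, which the interval of `u` covers. -/
theorem Prereduced.mem_closedNbhd_of_adj_center (hG : Prereduced G) {u x a b c d e : V}
    (hab : G.Adj a b) (hbc : G.Adj b c) (hcd : G.Adj c d) (hde : G.Adj d e)
    (hub : G.Adj u b) (hud : G.Adj u d) (hxc : G.Adj x c)
    (hac : a ≠ c) (hac' : ¬ G.Adj a c) (hbd : b ≠ d) (hbd' : ¬ G.Adj b d)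
    (hce : c ≠ e) (hce' : ¬ G.Adj c e) (hxb : ¬ G.Adj x b) (hxd : ¬ G.Adj x d) :
    x ∈ closedNbhd G u := by
  by_contra hx
  obtain ⟨hxu, hux⟩ := not_or.mp hx
  obtain ⟨l, r, hm⟩ := hG.exists_isIntervalModelOn [u, x, a, b, c, d, e] (by simp)
  have := hm.le_of_adj hab
  have := hm.le_of_adj hbc
  have := hm.le_of_adj hcd
  have := hm.le_of_adj hde
  have := hm.le_of_adj hub
  have := hm.le_of_adj hud
  have := hm.le_of_adj hxc
  have sep_bd := hm.lt_or_lt_of_not_adj hbd hbd'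
  have sep_ac := hm.lt_or_lt_of_not_adj hac hac'
  have sep_ce := hm.lt_or_lt_of_not_adj hce hce'
  have sep_xu := hm.lt_or_lt_of_not_adj hxu (fun h => hux h.symm)
  have sep_xb := hm.lt_or_lt_of_not_adj (by rintro rfl; exact hux hub) hxb
  have sep_xd := hm.lt_or_lt_of_not_adj (by rintro rfl; exact hux hud) hxd
  rcases sep_bd with _ | _ <;> rcases sep_ac with _ | _ <;> rcases sep_ce with _ | _ <;>
    rcases sep_xu with _ | _ <;> rcases sep_xb with _ | _ <;> rcases sep_xd with _ | _ <;>
    linarith [hm.le u, hm.le x, hm.le a, hm.le b, hm.le c, hm.le d, hm.le e]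

structure IsChordlessPath (G : SimpleGraph V) (w : ℕ → V) (p : ℕ) : Prop where
  injOn : Set.InjOn w (Set.Iic p)
  adj_iff {i j : ℕ} : i ≤ p → j ≤ p → (G.Adj (w i) (w j) ↔ i + 1 = j ∨ j + 1 = i)

theorem isChordlessPath_comp_clamp {p : ℕ} {v : Fin (p + 1) → V} (hinj : Function.Injective v)
    (hpath : ∀ i j : Fin (p + 1), G.Adj (v i) (v j) ↔ (i.val + 1 = j.val ∨ j.val + 1 = i.val)) :
    IsChordlessPath G (fun k => v (Fin.clamp k p)) p where
  injOn i hi j hj hij := by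
    simpa [Fin.ext_iff, Fin.clamp, min_eq_left (Set.mem_Iic.mp hi),
      min_eq_left (Set.mem_Iic.mp hj)] using hinj hij
  adj_iff hi hj := by simpa [Fin.clamp, min_eq_left hi, min_eq_left hj] using hpath _ _

namespace IsChordlessPath

variable {w : ℕ → V} {p : ℕ} {u x : V}

theorem adj_succ (hw : IsChordlessPath G w p) {i : ℕ} (hi : i + 1 ≤ p) :
    G.Adj (w i) (w (i + 1)) :=
  (hw.adj_iff (by omega) hi).2 (Or.inl rfl)

theorem not_adj (hw : IsChordlessPath G w p) {i j : ℕ} (hij : i + 2 ≤ j) (hj : j ≤ p) :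
    ¬ G.Adj (w i) (w j) := by
  rw [hw.adj_iff (by omega) hj]
  omega

theorem ne (hw : IsChordlessPath G w p) {i j : ℕ} (hij : i < j) (hj : j ≤ p) : w i ≠ w j :=
  fun h => hij.ne (hw.injOn (Set.mem_Iic.mpr (by omega)) (Set.mem_Iic.mpr hj) h)

theorem mem_closedNbhd_of_adj_ends (hG : Prereduced G) (hw : IsChordlessPath G w p) {i j : ℕ}
    (hij : i + 2 ≤ j) (hj : j + 1 ≤ p) (hui : G.Adj u (w i)) (huj : G.Adj u (w (j + 1)))
    (hxi : G.Adj x (w (i + 1))) (hxj : G.Adj x (w j)) : x ∈ closedNbhd G u :=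
  hG.mem_closedNbhd_of_adj_ends (hw.adj_succ (by omega)) (hw.adj_succ hj) hui huj hxi hxj
    (hw.not_adj hij (by omega)) (hw.not_adj (by omega) hj) (hw.not_adj (by omega) hj)

theorem mem_closedNbhd_of_adj_center (hG : Prereduced G) (hw : IsChordlessPath G w p) {m : ℕ}
    (hm : m + 4 ≤ p) (hu₁ : G.Adj u (w (m + 1))) (hu₃ : G.Adj u (w (m + 3)))
    (hx : G.Adj x (w (m + 2))) (hx₁ : ¬ G.Adj x (w (m + 1))) (hx₃ : ¬ G.Adj x (w (m + 3))) :
    x ∈ closedNbhd G u :=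
  hG.mem_closedNbhd_of_adj_center (hw.adj_succ (by omega)) (hw.adj_succ (by omega))
    (hw.adj_succ (by omega)) (hw.adj_succ hm) hu₁ hu₃ hx
    (hw.ne (by omega) (by omega)) (hw.not_adj (by omega) (by omega))
    (hw.ne (by omega) (by omega)) (hw.not_adj (by omega) (by omega))
    (hw.ne (by omega) hm) (hw.not_adj (by omega) hm) hx₁ hx₃

theorem closedNbhd_subset (hG : Prereduced G) (hw : IsChordlessPath G w p)
    (hu : ∀ k ≤ p, G.Adj u (w k)) {ℓ : ℕ} (hℓ₀ : 2 ≤ ℓ) (hℓ : ℓ + 2 ≤ p) :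
    closedNbhd G (w ℓ) ⊆ closedNbhd G u := by
  obtain ⟨m, rfl⟩ : ∃ m, ℓ = m + 2 := ⟨ℓ - 2, by omega⟩
  rintro x (rfl | hx)
  · exact Or.inr (hu _ (by omega))
  by_cases hx₁ : G.Adj x (w (m + 1))
  · exact hw.mem_closedNbhd_of_adj_ends hG le_rfl (by omega) (hu _ (by omega))
      (hu _ (by omega)) hx₁ hx.symm
  by_cases hx₃ : G.Adj x (w (m + 3))
  · exact hw.mem_closedNbhd_of_adj_ends hG le_rfl hℓ (hu _ (by omega)) (hu _ hℓ) hx.symm hx₃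
  exact hw.mem_closedNbhd_of_adj_center hG hℓ (hu _ (by omega)) (hu _ (by omega)) hx.symm hx₁ hx₃

theorem closedNbhd_inter_closedNbhd_subset (hG : Prereduced G) (hw : IsChordlessPath G w p)
    (hu : ∀ k ≤ p, G.Adj u (w k)) {ℓ : ℕ} (hℓ₀ : 1 ≤ ℓ) (hℓ : ℓ + 2 ≤ p) :
    closedNbhd G (w ℓ) ∩ closedNbhd G (w (ℓ + 1)) ⊆ closedNbhd G u := by
  obtain ⟨m, rfl⟩ : ∃ m, ℓ = m + 1 := ⟨ℓ - 1, by omega⟩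
  rintro x ⟨rfl | hx₁, hx₂⟩
  · exact Or.inr (hu _ (by omega))
  obtain rfl | hx₂ := hx₂
  · exact Or.inr (hu _ (by omega))
  exact hw.mem_closedNbhd_of_adj_ends hG le_rfl hℓ (hu _ (by omega)) (hu _ hℓ) hx₁.symm hx₂.symm

theorem closedNbhd_diff_subset (hG : Prereduced G) (hw : IsChordlessPath G w p)
    (hu : ∀ k, 0 < k → k < p → G.Adj u (w k)) {ℓ : ℕ} (hℓ₀ : 2 ≤ ℓ) (hℓ : ℓ + 2 ≤ p) :
    closedNbhd G (w ℓ) \ (G.neighborSet (w 1) ∪ G.neighborSet (w (p - 1))) ⊆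
      closedNbhd G u := by
  obtain ⟨m, rfl⟩ : ∃ m, ℓ = m + 2 := ⟨ℓ - 2, by omega⟩
  rintro x ⟨rfl | hx, hx'⟩
  · exact Or.inr (hu _ (by omega) (by omega))
  simp only [Set.mem_union, SimpleGraph.mem_neighborSet, not_or] at hx'
  obtain ⟨i, hi₁, hiℓ, hxi, hxi'⟩ := Nat.exists_not_and_succ (P := fun k => G.Adj x (w k))
    (by omega : 1 ≤ m + 2) (fun h => hx'.1 h.symm) hx.symm
  obtain ⟨j, hℓj, hjp, hxj, hxj'⟩ := Nat.exists_not_and_succ (P := fun k => ¬ G.Adj x (w k))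
    (by omega : m + 2 ≤ p - 1) (not_not.mpr hx.symm) (fun h => hx'.2 h.symm)
  rw [not_not] at hxj
  by_cases hij : i + 2 ≤ j
  · exact hw.mem_closedNbhd_of_adj_ends hG hij (by omega) (hu _ (by omega) (by omega))
      (hu _ (by omega) (by omega)) hxi' hxj
  obtain rfl : i = m + 1 := by omega
  obtain rfl : j = m + 2 := by omega
  exact hw.mem_closedNbhd_of_adj_center hG hℓ (hu _ (by omega) (by omega))
    (hu _ (by omega) (by omega)) hx.symm hxi hxj'

end IsChordlessPath

end

/-- Properties of a vertex adjacent to all inner vertices of a chordless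
path in a prereduced graph. -/
theorem stmt_3 {V : Type*} (G : SimpleGraph V) (hG : Prereduced G)
    (p : ℕ) (v : Fin (p + 1) → V) (hinj : Function.Injective v)
    (hpath : ∀ i j : Fin (p + 1),
      G.Adj (v i) (v j) ↔ (i.val + 1 = j.val ∨ j.val + 1 = i.val))
    (u : V) (hu : ∀ i : Fin (p + 1), 0 < i.val → i.val < p → G.Adj u (v i)) :
    (∀ (hp : 4 ≤ p), G.Adj u (v 0) → G.Adj u (v (Fin.last p)) →
      ∀ ℓ : ℕ, ∀ (h2 : 2 ≤ ℓ) (hℓ : ℓ ≤ p - 2),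
        closedNbhd G (v ⟨ℓ, by omega⟩) ⊆ closedNbhd G u) ∧
    (∀ (hp : 3 ≤ p), G.Adj u (v 0) → G.Adj u (v (Fin.last p)) →
      ∀ ℓ : ℕ, ∀ (h1 : 1 ≤ ℓ) (hℓ : ℓ ≤ p - 2),
        closedNbhd G (v ⟨ℓ, by omega⟩) ∩ closedNbhd G (v ⟨ℓ + 1, by omega⟩) ⊆
          closedNbhd G u) ∧
    (∀ (hp : 4 ≤ p),
      ∀ ℓ : ℕ, ∀ (h2 : 2 ≤ ℓ) (hℓ : ℓ ≤ p - 2),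
        closedNbhd G (v ⟨ℓ, by omega⟩) \
            (G.neighborSet (v ⟨1, by omega⟩) ∪ G.neighborSet (v ⟨p - 1, by omega⟩)) ⊆
          closedNbhd G u) := by
  set w : ℕ → V := fun k => v (Fin.clamp k p)
  have hw : IsChordlessPath G w p := isChordlessPath_comp_clamp hinj hpath
  have hvw (k : ℕ) (hk : k < p + 1) : v ⟨k, hk⟩ = w k := by
    simp [w, Fin.clamp, min_eq_left (Nat.le_of_lt_succ hk)]
  have huw (k : ℕ) (hk₀ : 0 < k) (hkp : k < p) : G.Adj u (w k) :=
    hvw k (by omega) ▸ hu ⟨k, by omega⟩ hk₀ hkp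
  have hu_all (hu₀ : G.Adj u (v 0)) (hu_last : G.Adj u (v (Fin.last p))) (k : ℕ) (hk : k ≤ p) :
      G.Adj u (w k) := by
    rcases Nat.eq_zero_or_pos k with rfl | hk₀
    · simpa [← hvw 0 (by omega)] using hu₀
    rcases hk.lt_or_eq with hkp | rfl
    · exact huw k hk₀ hkp
    · rw [← hvw k (by omega)]
      exact hu_last
  refine ⟨fun hp hu₀ hu_last ℓ h2 hℓ => ?_, fun hp hu₀ hu_last ℓ h1 hℓ => ?_, fun hp ℓ h2 hℓ => ?_⟩
  · rw [hvw]
    exact hw.closedNbhd_subset hG (hu_all hu₀ hu_last) h2 (by omega)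
  · rw [hvw, hvw]
    exact hw.closedNbhd_inter_closedNbhd_subset hG (hu_all hu₀ hu_last) h1 (by omega)
  · rw [hvw, hvw, hvw]
    exact hw.closedNbhd_diff_subset hG huw h2 (by omega)
end

section
/- Let G be a finite prereduced graph, H a hole of G, and v any vertex of G. Then N_H[v] is consecutive in H: there is a cyclic ordering h₀, h₁, …, h_{m−1} of the vertices of H realizing the induced cycle (h_i adjacent to h_{i+1 mod m} and no other adjacencies within H) such that N_H[v] = {h₀, …, h_j} for some j, or N_H[v] = ∅. Moreover, either N_H[v] = H or |N_H[v]| < |H| − 7. -/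
/-!
Every set of at most ten vertices of a prereduced graph induces an interval graph. So a hole has
at least 11 vertices, and for `v ∉ H` two neighbours of `v` on `H` separated by at most seven
non-neighbours would close a hole of length at most 10 through `v`: every gap between neighbours
has at least eight vertices. If the neighbours of `v` on `H` formed two or more runs, the ends of
the runs would span, on at most seven vertices, a claw whose three legs have length two, or a net;
neither is an interval graph. Hence `N_H[v]` is one run followed by a gap of at least eight
vertices; for `v ∈ H` it consists of `v` and its two neighbours on `H`.
-/

section

variable {V : Type*} {G : SimpleGraph V}

structure IsIntervalModelOn_s9 (G : SimpleGraph V) (X : Set V) (a b : V → ℝ) : Prop where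
  le : ∀ u ∈ X, a u ≤ b u
  adj_iff : ∀ u ∈ X, ∀ w ∈ X, u ≠ w → (G.Adj u w ↔ a u ≤ b w ∧ a w ≤ b u)

namespace IsIntervalModelOn_s9

variable {X : Set V} {a b : V → ℝ} {u w : V}

theorem overlap (h : IsIntervalModelOn_s9 G X a b) (hu : u ∈ X) (hw : w ∈ X) (huw : G.Adj u w) :
    a u ≤ b w ∧ a w ≤ b u :=
  (h.adj_iff u hu w hw huw.ne).1 huw

theorem separated (h : IsIntervalModelOn_s9 G X a b) (hu : u ∈ X) (hw : w ∈ X)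
    (huw : Gᶜ.Adj u w) : b w < a u ∨ b u < a w := by
  rw [SimpleGraph.compl_adj] at huw
  by_contra! hsep
  exact huw.2 ((h.adj_iff u hu w hw huw.1).2 hsep)

theorem neg (h : IsIntervalModelOn_s9 G X a b) : IsIntervalModelOn_s9 G X (-b) (-a) where
  le u hu := neg_le_neg (h.le u hu)
  adj_iff u hu w hw huw := by
    simp only [Pi.neg_apply, neg_le_neg_iff]
    rw [h.adj_iff u hu w hw huw, and_comm]

end IsIntervalModelOn_s9

theorem Prereduced.isIntervalGraph_induce_s9 (hG : Prereduced G) {X : Set V} (hX : X.Finite)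
    (hcard : X.ncard ≤ 10) : IsIntervalGraph (G.induce X) := by
  by_contra hXint
  have hfin : {Y | Y ⊆ X ∧ ¬ IsIntervalGraph (G.induce Y)}.Finite :=
    hX.finite_subsets.subset fun Y hY => hY.1
  obtain ⟨Y, -, ⟨hYX, hY⟩, hYmin⟩ := hfin.exists_le_minimal ⟨subset_rfl, hXint⟩
  refine hG Y ((Set.ncard_le_ncard hYX hX).trans hcard) ⟨hY, fun Z hZY => ?_⟩
  by_contra hZ
  exact hZY.not_superset (hYmin ⟨hZY.subset.trans hYX, hZ⟩ hZY.subset)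

theorem Prereduced.exists_isIntervalModelOn_s9 (hG : Prereduced G) (l : List V)
    (hl : l.length ≤ 10) : ∃ a b : V → ℝ, IsIntervalModelOn_s9 G {w | w ∈ l} a b := by
  classical
  have hcard : {w | w ∈ l}.ncard ≤ 10 := by
    rw [← List.coe_toFinset, Set.ncard_coe_finset]
    exact l.toFinset_card_le.trans hl
  obtain ⟨I, hI, hadj⟩ := hG.isIntervalGraph_induce_s9 l.finite_toSet hcard
  choose a b hab hI using hI
  let extend (g : {w | w ∈ l} → ℝ) (u : V) : ℝ := if hu : u ∈ l then g ⟨u, hu⟩ else 0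
  refine ⟨extend a, extend b, fun u hu => ?_, fun u hu w hw huw => ?_⟩
  · simp only [extend, dif_pos (show u ∈ l from hu)]
    exact hab ⟨u, hu⟩
  · have := hadj ⟨u, hu⟩ ⟨w, hw⟩ (by simpa using huw)
    simp only [SimpleGraph.comap_adj, Function.Embedding.subtype_apply, hI, Set.Icc_inter_Icc,
      Set.nonempty_Icc, max_le_iff, le_min_iff] at this
    have hu' := hab ⟨u, hu⟩
    have hw' := hab ⟨w, hw⟩
    simp only [extend, dif_pos (show u ∈ l from hu), dif_pos (show w ∈ l from hw)]
    rw [this]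
    tauto

theorem Prereduced.not_claw (hG : Prereduced G) {u x₁ x₂ x₃ y₁ y₂ y₃ : V}
    (hux₁ : G.Adj u x₁) (hux₂ : G.Adj u x₂) (hux₃ : G.Adj u x₃)
    (hxy₁ : G.Adj x₁ y₁) (hxy₂ : G.Adj x₂ y₂) (hxy₃ : G.Adj x₃ y₃)
    (huy₁ : Gᶜ.Adj u y₁) (huy₂ : Gᶜ.Adj u y₂) (huy₃ : Gᶜ.Adj u y₃)
    (hx₁₂ : Gᶜ.Adj x₁ x₂) (hx₁₃ : Gᶜ.Adj x₁ x₃) (hx₂₃ : Gᶜ.Adj x₂ x₃) : False := by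
  obtain ⟨a, b, h⟩ := hG.exists_isIntervalModelOn_s9 [u, x₁, x₂, x₃, y₁, y₂, y₃] (by simp)
  have := h.le x₁ (by simp); have := h.le x₂ (by simp); have := h.le x₃ (by simp)
  obtain ⟨_, _⟩ := h.overlap (by simp) (by simp) hux₁
  obtain ⟨_, _⟩ := h.overlap (by simp) (by simp) hux₂
  obtain ⟨_, _⟩ := h.overlap (by simp) (by simp) hux₃
  obtain ⟨_, _⟩ := h.overlap (by simp) (by simp) hxy₁
  obtain ⟨_, _⟩ := h.overlap (by simp) (by simp) hxy₂
  obtain ⟨_, _⟩ := h.overlap (by simp) (by simp) hxy₃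
  -- the interval of the middle `xᵢ` lies inside that of `u`, so `yᵢ` would meet `u`
  rcases h.separated (by simp) (by simp) hx₁₂ with _ | _ <;>
  rcases h.separated (by simp) (by simp) hx₁₃ with _ | _ <;>
  rcases h.separated (by simp) (by simp) hx₂₃ with _ | _ <;>
  first
  | linarith
  | rcases h.separated (by simp) (by simp) huy₁ with _ | _ <;>
    rcases h.separated (by simp) (by simp) huy₂ with _ | _ <;>
    rcases h.separated (by simp) (by simp) huy₃ with _ | _ <;>
    linarith

theorem Prereduced.not_net (hG : Prereduced G) {x₁ x₂ x₃ y₁ y₂ y₃ : V}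
    (hx₁₂ : G.Adj x₁ x₂) (hx₁₃ : G.Adj x₁ x₃) (hx₂₃ : G.Adj x₂ x₃)
    (hxy₁ : G.Adj x₁ y₁) (hxy₂ : G.Adj x₂ y₂) (hxy₃ : G.Adj x₃ y₃)
    (h₁₂ : Gᶜ.Adj x₁ y₂) (h₁₃ : Gᶜ.Adj x₁ y₃) (h₂₁ : Gᶜ.Adj x₂ y₁)
    (h₂₃ : Gᶜ.Adj x₂ y₃) (h₃₁ : Gᶜ.Adj x₃ y₁) (h₃₂ : Gᶜ.Adj x₃ y₂) : False := by
  obtain ⟨a, b, h⟩ := hG.exists_isIntervalModelOn_s9 [x₁, x₂, x₃, y₁, y₂, y₃] (by simp)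
  have := h.le x₁ (by simp); have := h.le x₂ (by simp); have := h.le x₃ (by simp)
  have := h.le y₁ (by simp); have := h.le y₂ (by simp); have := h.le y₃ (by simp)
  obtain ⟨_, _⟩ := h.overlap (by simp) (by simp) hx₁₂
  obtain ⟨_, _⟩ := h.overlap (by simp) (by simp) hx₁₃
  obtain ⟨_, _⟩ := h.overlap (by simp) (by simp) hx₂₃
  obtain ⟨_, _⟩ := h.overlap (by simp) (by simp) hxy₁
  obtain ⟨_, _⟩ := h.overlap (by simp) (by simp) hxy₂
  obtain ⟨_, _⟩ := h.overlap (by simp) (by simp) hxy₃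
  rcases h.separated (by simp) (by simp) h₁₂ with _ | _ <;>
  rcases h.separated (by simp) (by simp) h₁₃ with _ | _ <;>
  rcases h.separated (by simp) (by simp) h₂₁ with _ | _ <;>
  rcases h.separated (by simp) (by simp) h₂₃ with _ | _ <;>
  rcases h.separated (by simp) (by simp) h₃₁ with _ | _ <;>
  rcases h.separated (by simp) (by simp) h₃₂ with _ | _ <;>
  linarith

theorem Prereduced.adj_of_path (hG : Prereduced G) {n : ℕ} (hn : 2 ≤ n) (hn8 : n ≤ 8)
    {v : V} {x : ℕ → V} (h0 : G.Adj v (x 0)) (hn' : G.Adj v (x n))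
    (hint : ∀ i, 0 < i → i < n → Gᶜ.Adj v (x i)) (hpath : ∀ i < n, G.Adj (x i) (x (i + 1)))
    (hne : x 0 ≠ x n) : G.Adj (x 0) (x n) := by
  obtain ⟨a, b, h⟩ :=
    hG.exists_isIntervalModelOn_s9 (v :: (List.range (n + 1)).map x) (by simp; omega)
  have hv : v ∈ {w | w ∈ v :: (List.range (n + 1)).map x} := by simp
  have hx : ∀ i ≤ n, x i ∈ {w | w ∈ v :: (List.range (n + 1)).map x} := fun i hi => by
    simp only [List.mem_cons, List.mem_map, List.mem_range]
    exact Or.inr ⟨i, by omega, rfl⟩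
  -- the interior of the path lies on one side of the interval of `v`; by symmetry, the left
  wlog hleft : b (x 1) < a v generalizing a b with H
  · refine H (-b) (-a) h.neg ?_
    simpa [hleft] using h.separated hv (hx 1 (by omega)) (hint 1 (by omega) (by omega))
  have hinterior : ∀ i, 1 ≤ i → i < n → b (x i) < a v := by
    intro i hi
    induction i, hi using Nat.le_induction with
    | base => exact fun _ => hleft
    | succ i hi ih =>
      intro hin
      have hleft_i := ih (by omega)
      have hv_le := h.le v hv
      obtain ⟨-, h₁⟩ := h.overlap (hx i (by omega)) (hx (i + 1) (by omega)) (hpath i (by omega))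
      rcases h.separated hv (hx (i + 1) (by omega)) (hint (i + 1) (by omega) hin) with h₂ | h₂
      · exact h₂
      · linarith
  have hlast := hpath (n - 1) (by omega)
  rw [Nat.sub_add_cancel (by omega)] at hlast
  obtain ⟨h₁, -⟩ := h.overlap (hx 0 (by omega)) (hx 1 (by omega)) (hpath 0 (by omega))
  obtain ⟨h₂, -⟩ := h.overlap hv (hx 0 (by omega)) h0
  obtain ⟨h₃, -⟩ := h.overlap hv (hx n le_rfl) hn'
  obtain ⟨-, h₄⟩ := h.overlap (hx (n - 1) (by omega)) (hx n le_rfl) hlast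
  have h₅ := hinterior (n - 1) (by omega) (by omega)
  exact (h.adj_iff _ (hx 0 (by omega)) _ (hx n le_rfl) hne).2 ⟨by linarith, by linarith⟩

theorem ZMod.natCast_eq_natCast_succ_iff {m i j : ℕ} (hi : i < m) (hj : j < m) :
    (j : ZMod m) = ((i + 1 : ℕ) : ZMod m) ↔ j = i + 1 ∨ (i + 1 = m ∧ j = 0) := by
  rw [ZMod.natCast_eq_natCast_iff', Nat.mod_eq_of_lt hj]
  rcases (show i + 1 ≤ m by omega).lt_or_eq with h | h
  · rw [Nat.mod_eq_of_lt h]; omega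
  · rw [h, Nat.mod_self]; omega

theorem ZMod.exists_and_not_sub_one {m : ℕ} [NeZero m] {P : ZMod m → Prop}
    (h₁ : ∃ i, P i) (h₂ : ∃ j, ¬P j) : ∃ a, P a ∧ ¬P (a - 1) := by
  by_contra! h
  obtain ⟨i, hi⟩ := h₁
  obtain ⟨j, hj⟩ := h₂
  have hdown : ∀ k : ℕ, P (i - k) := by
    intro k
    induction k with
    | zero => simpa using hi
    | succ k ih => simpa [sub_sub] using h _ ih
  exact hj (by simpa using hdown (i - j).val)

theorem ZMod.eq_image_add_natCast_Iic {m : ℕ} [NeZero m] {s : Set (ZMod m)} (c : ZMod m)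
    {r : ℕ} (hr : r < m) (h : ∀ k < m, c + k ∈ s ↔ k ≤ r) :
    s = (fun k : ℕ => c + k) '' Set.Iic r := by
  ext i
  constructor
  · intro hi
    exact ⟨(i - c).val, (h _ (ZMod.val_lt _)).1 (by simpa using hi), by simp⟩
  · rintro ⟨k, hk, rfl⟩
    exact (h k (by rw [Set.mem_Iic] at hk; omega)).2 hk

theorem ZMod.ncard_image_add_natCast_Iic {m : ℕ} (c : ZMod m) {r : ℕ} (hr : r < m) :
    ((fun k : ℕ => c + k) '' Set.Iic r).ncard = r + 1 := by
  rw [Set.InjOn.ncard_image, ← Finset.coe_Iic, Set.ncard_coe_finset, Nat.card_Iic]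
  intro k hk l hl hkl
  rw [Set.mem_Iic] at hk hl
  rwa [add_right_inj, ZMod.natCast_eq_natCast_iff', Nat.mod_eq_of_lt (by omega),
    Nat.mod_eq_of_lt (by omega)] at hkl

theorem Nat.exists_forall_le_and_not_succ {Q : ℕ → Prop} {n : ℕ} (h0 : Q 0) (hn : ¬Q n) :
    ∃ r < n, (∀ k ≤ r, Q k) ∧ ¬Q (r + 1) := by
  classical
  have hpos : n ≠ 0 := by rintro rfl; exact hn h0
  have hex : ∃ k, ¬Q (k + 1) := ⟨n - 1, by rwa [Nat.sub_add_cancel (by omega)]⟩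
  refine ⟨Nat.find hex, ?_, fun k hk => ?_, Nat.find_spec hex⟩
  · have := Nat.find_min' hex (m := n - 1) (by rwa [Nat.sub_add_cancel (by omega)])
    omega
  · rcases k with _ | k
    · exact h0
    · exact not_not.1 (Nat.find_min hex (by omega))

structure IsInducedCycle {m : ℕ} (G : SimpleGraph V) (f : ZMod m → V) : Prop where
  injective : Function.Injective f
  adj_iff : ∀ i j, G.Adj (f i) (f j) ↔ j = i + 1 ∨ i = j + 1

namespace IsInducedCycle

variable {m : ℕ} {f : ZMod m → V} {v : V}

theorem comp_add_left (hC : IsInducedCycle G f) (c : ZMod m) :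
    IsInducedCycle G (fun i => f (c + i)) where
  injective := hC.injective.comp (add_right_injective c)
  adj_iff i j := by rw [hC.adj_iff, add_assoc, add_assoc, add_right_inj, add_right_inj]

theorem apply_add_natCast_eq_iff (hC : IsInducedCycle G f) (c : ZMod m) {i j : ℕ}
    (hi : i < m) (hj : j < m) : f (c + i) = f (c + j) ↔ i = j := by
  rw [hC.injective.eq_iff, add_right_inj, ZMod.natCast_eq_natCast_iff', Nat.mod_eq_of_lt hi,
    Nat.mod_eq_of_lt hj]

theorem adj_add_natCast_iff (hC : IsInducedCycle G f) (c : ZMod m) {i j : ℕ}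
    (hi : i < m) (hj : j < m) :
    G.Adj (f (c + i)) (f (c + j)) ↔
      j = i + 1 ∨ i = j + 1 ∨ (i + 1 = m ∧ j = 0) ∨ (j + 1 = m ∧ i = 0) := by
  rw [hC.adj_iff, add_assoc, add_assoc, add_right_inj, add_right_inj, ← Nat.cast_succ,
    ← Nat.cast_succ, ZMod.natCast_eq_natCast_succ_iff hi hj,
    ZMod.natCast_eq_natCast_succ_iff hj hi]
  tauto

theorem compl_adj_add_natCast_iff (hC : IsInducedCycle G f) (c : ZMod m) {i j : ℕ}
    (hi : i < m) (hj : j < m) :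
    Gᶜ.Adj (f (c + i)) (f (c + j)) ↔
      i ≠ j ∧ ¬(j = i + 1 ∨ i = j + 1 ∨ (i + 1 = m ∧ j = 0) ∨ (j + 1 = m ∧ i = 0)) := by
  rw [SimpleGraph.compl_adj, ne_eq, hC.apply_add_natCast_eq_iff c hi hj,
    hC.adj_add_natCast_iff c hi hj]

theorem nine_le_of_gap (hC : IsInducedCycle G f) (hG : Prereduced G) {c : ZMod m} {n : ℕ}
    (hn : 2 ≤ n) (hnm : n + 2 ≤ m) (h0 : G.Adj v (f c)) (hn' : G.Adj v (f (c + n)))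
    (hgap : ∀ k, 0 < k → k < n → Gᶜ.Adj v (f (c + k))) : 9 ≤ n := by
  by_contra! hn8
  have hends := (hC.compl_adj_add_natCast_iff c (i := 0) (j := n) (by omega) (by omega)).2
    (by omega)
  refine hends.2 (hG.adj_of_path hn (by omega) (x := fun k : ℕ => f (c + k)) (by simpa) hn'
    hgap (fun i hi => ?_) hends.1)
  exact (hC.adj_add_natCast_iff c (by omega) (by omega)).2 (by omega)

theorem ten_lt (hC : IsInducedCycle G f) (hG : Prereduced G) (hm : 4 ≤ m) : 10 < m := by
  have hv : G.Adj (f (0 + (m - 1 : ℕ))) (f 0) := by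
    simpa using (hC.adj_add_natCast_iff 0 (i := m - 1) (j := 0) (by omega) (by omega)).2
      (by omega)
  have := hC.nine_le_of_gap hG (n := m - 2) (by omega) (by omega) hv
    ((hC.adj_add_natCast_iff 0 (by omega) (by omega)).2 (by omega))
    (fun k hk hkn => (hC.compl_adj_add_natCast_iff 0 (by omega) (by omega)).2 (by omega))
  omega

theorem compl_adj_of_notMem_range (hv : v ∉ Set.range f) {i : ZMod m}
    (h : ¬G.Adj v (f i)) : Gᶜ.Adj v (f i) :=
  ⟨fun e => hv ⟨i, e.symm⟩, h⟩

/- The three shapes (`r = 0`, `r = 1`, `r ≥ 2`) of a run `f a, …, f (a + r)` of neighbours of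
`v`, followed by a second neighbour `f (a + p)` before returning to `f a`: each contains a claw
with long legs or a net. -/

theorem false_of_isolated_neighbor (hC : IsInducedCycle G f) (hG : Prereduced G)
    (hv : v ∉ Set.range f) {a : ZMod m} {p : ℕ} (hp2 : 2 ≤ p) (hpm : p + 2 ≤ m)
    (h0 : G.Adj v (f (a + (0 : ℕ)))) (h1 : ¬G.Adj v (f (a + (1 : ℕ))))
    (hlast : ¬G.Adj v (f (a + (m - 1 : ℕ)))) (hp : G.Adj v (f (a + p))) : False := by
  have adj {i j : ℕ} (hi : i < m) (hj : j < m) := (hC.adj_add_natCast_iff a hi hj).2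
  have nadj {i j : ℕ} (hi : i < m) (hj : j < m) := (hC.compl_adj_add_natCast_iff a hi hj).2
  exact hG.not_claw (u := f (a + (0 : ℕ))) (x₁ := f (a + (m - 1 : ℕ))) (x₂ := f (a + (1 : ℕ)))
    (x₃ := v) (y₁ := f (a + (m - 2 : ℕ))) (y₂ := f (a + (2 : ℕ))) (y₃ := f (a + p))
    (adj (by omega) (by omega) (by omega)) (adj (by omega) (by omega) (by omega)) h0.symm
    (adj (by omega) (by omega) (by omega)) (adj (by omega) (by omega) (by omega)) hp
    (nadj (by omega) (by omega) (by omega)) (nadj (by omega) (by omega) (by omega))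
    (nadj (by omega) (by omega) (by omega)) (nadj (by omega) (by omega) (by omega))
    (compl_adj_of_notMem_range hv hlast).symm (compl_adj_of_notMem_range hv h1).symm

theorem false_of_neighbor_pair (hC : IsInducedCycle G f) (hG : Prereduced G)
    (hv : v ∉ Set.range f) {a : ZMod m} {p : ℕ} (hp3 : 3 ≤ p) (hpm : p + 2 ≤ m)
    (h0 : G.Adj v (f (a + (0 : ℕ)))) (h1 : G.Adj v (f (a + (1 : ℕ))))
    (h2 : ¬G.Adj v (f (a + (2 : ℕ)))) (hlast : ¬G.Adj v (f (a + (m - 1 : ℕ))))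
    (hp : G.Adj v (f (a + p))) : False := by
  have adj {i j : ℕ} (hi : i < m) (hj : j < m) := (hC.adj_add_natCast_iff a hi hj).2
  have nadj {i j : ℕ} (hi : i < m) (hj : j < m) := (hC.compl_adj_add_natCast_iff a hi hj).2
  exact hG.not_net (x₁ := v) (x₂ := f (a + (0 : ℕ))) (x₃ := f (a + (1 : ℕ)))
    (y₁ := f (a + p)) (y₂ := f (a + (m - 1 : ℕ))) (y₃ := f (a + (2 : ℕ)))
    h0 h1 (adj (by omega) (by omega) (by omega))
    hp (adj (by omega) (by omega) (by omega)) (adj (by omega) (by omega) (by omega))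
    (compl_adj_of_notMem_range hv hlast) (compl_adj_of_notMem_range hv h2)
    (nadj (by omega) (by omega) (by omega)) (nadj (by omega) (by omega) (by omega))
    (nadj (by omega) (by omega) (by omega)) (nadj (by omega) (by omega) (by omega))

theorem false_of_three_ends (hC : IsInducedCycle G f) (hG : Prereduced G)
    (hv : v ∉ Set.range f) {a : ZMod m} {r p : ℕ} (hr2 : 2 ≤ r) (hrp : r + 2 ≤ p)
    (hpm : p + 2 ≤ m) (h0 : G.Adj v (f (a + (0 : ℕ))))
    (hlast : ¬G.Adj v (f (a + (m - 1 : ℕ)))) (hr : G.Adj v (f (a + r)))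
    (hr1 : ¬G.Adj v (f (a + (r + 1 : ℕ)))) (hp : G.Adj v (f (a + p)))
    (hp1 : ¬G.Adj v (f (a + (p + 1 : ℕ)))) : False := by
  have adj {i j : ℕ} (hi : i < m) (hj : j < m) := (hC.adj_add_natCast_iff a hi hj).2
  have nadj {i j : ℕ} (hi : i < m) (hj : j < m) := (hC.compl_adj_add_natCast_iff a hi hj).2
  exact hG.not_claw (u := v) (x₁ := f (a + (0 : ℕ))) (x₂ := f (a + r)) (x₃ := f (a + p))
    (y₁ := f (a + (m - 1 : ℕ))) (y₂ := f (a + (r + 1 : ℕ))) (y₃ := f (a + (p + 1 : ℕ)))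
    h0 hr hp
    (adj (by omega) (by omega) (by omega)) (adj (by omega) (by omega) (by omega))
    (adj (by omega) (by omega) (by omega))
    (compl_adj_of_notMem_range hv hlast) (compl_adj_of_notMem_range hv hr1)
    (compl_adj_of_notMem_range hv hp1)
    (nadj (by omega) (by omega) (by omega)) (nadj (by omega) (by omega) (by omega))
    (nadj (by omega) (by omega) (by omega))

theorem not_adj_of_run_lt (hC : IsInducedCycle G f) (hG : Prereduced G)
    (hv : v ∉ Set.range f) {a : ZMod m} {r : ℕ} (hlast : ¬G.Adj v (f (a + (m - 1 : ℕ))))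
    (hrun : ∀ k ≤ r, G.Adj v (f (a + k))) (hr : ¬G.Adj v (f (a + (r + 1 : ℕ))))
    {k : ℕ} (hrk : r < k) (hkm : k < m) : ¬G.Adj v (f (a + k)) := by
  classical
  have hrm : r + 2 ≤ m := by
    by_contra! h
    exact hlast (hrun _ (by omega))
  set p := Nat.findGreatest (fun k : ℕ => G.Adj v (f (a + k))) (m - 1)
  suffices hpr : p = r from
    Nat.findGreatest_is_greatest (P := fun k : ℕ => G.Adj v (f (a + k))) (n := m - 1)
      (by omega) (by omega)
  have hrp : r ≤ p := Nat.le_findGreatest (by omega) (hrun r le_rfl)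
  by_contra hpr
  have hp : G.Adj v (f (a + p)) :=
    Nat.findGreatest_spec (P := fun k : ℕ => G.Adj v (f (a + k))) (by omega) (hrun r le_rfl)
  have hpm : p ≤ m - 1 := Nat.findGreatest_le _
  have hpr1 : p ≠ r + 1 := fun h => hr (h ▸ hp)
  have hpm1 : p ≠ m - 1 := fun h => hlast (h ▸ hp)
  have hp1 : ¬G.Adj v (f (a + (p + 1 : ℕ))) :=
    Nat.findGreatest_is_greatest (P := fun k : ℕ => G.Adj v (f (a + k))) (n := m - 1)
      (by omega) (by omega)
  obtain rfl | rfl | hr2 : r = 0 ∨ r = 1 ∨ 2 ≤ r := by omega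
  · exact hC.false_of_isolated_neighbor hG hv (by omega) (by omega) (hrun 0 le_rfl) hr hlast hp
  · exact hC.false_of_neighbor_pair hG hv (by omega) (by omega) (hrun 0 (by omega))
      (hrun 1 le_rfl) hr hlast hp
  · exact hC.false_of_three_ends hG hv hr2 (by omega) (by omega) (hrun 0 (by omega)) hlast
      (hrun r le_rfl) hr hp hp1

theorem exists_eq_arc_of_notMem_range (hC : IsInducedCycle G f) (hG : Prereduced G)
    (hm : 10 < m) (hv : v ∉ Set.range f) (hne : ∃ i, G.Adj v (f i))
    (hnu : ∃ i, ¬G.Adj v (f i)) :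
    ∃ c : ZMod m, ∃ r : ℕ, r + 8 < m ∧
      {i | G.Adj v (f i)} = (fun k : ℕ => c + k) '' Set.Iic r := by
  have : NeZero m := ⟨by omega⟩
  obtain ⟨a, ha, hlast⟩ := ZMod.exists_and_not_sub_one hne hnu
  have hlast' : ¬G.Adj v (f (a + (m - 1 : ℕ))) := by
    rwa [Nat.cast_pred (by omega), ZMod.natCast_self, zero_sub, ← sub_eq_add_neg]
  obtain ⟨r, hrm, hrun, hr⟩ := Nat.exists_forall_le_and_not_succ
    (Q := fun k : ℕ => G.Adj v (f (a + k))) (by simpa using ha) hlast'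
  have hbeyond {k : ℕ} := hC.not_adj_of_run_lt hG hv hlast' hrun hr (k := k)
  refine ⟨a, r, ?_, ZMod.eq_image_add_natCast_Iic a (by omega) fun k hk =>
    ⟨fun h => by_contra fun hrk => hbeyond (by omega) hk h, hrun k⟩⟩
  obtain hr1 | hr2 : r ≤ 1 ∨ 2 ≤ r := by omega
  · omega
  -- the gap `f (a + r + 1), …, f (a - 1)` between the two ends of the run is long
  have hwrap : a + r + ((m - r : ℕ) : ZMod m) = a := by
    rw [add_assoc, ← Nat.cast_add, Nat.add_sub_cancel' (by omega), ZMod.natCast_self, add_zero]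
  have := hC.nine_le_of_gap hG (c := a + r) (n := m - r) (by omega) (by omega)
    (hrun r le_rfl) (by rwa [hwrap]) fun k hk hkn => by
      rw [add_assoc, ← Nat.cast_add]
      exact compl_adj_of_notMem_range hv (hbeyond (by omega) (by omega))
  omega

theorem preimage_closedNbhd_apply_add_one (hC : IsInducedCycle G f) (hm : 4 ≤ m)
    (c : ZMod m) :
    f ⁻¹' closedNbhd G (f (c + (1 : ℕ))) = (fun k : ℕ => c + k) '' Set.Iic 2 := by
  have : NeZero m := ⟨by omega⟩
  refine ZMod.eq_image_add_natCast_Iic c (by omega) fun k hk => ?_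
  rw [Set.mem_preimage, closedNbhd, Set.mem_insert_iff, SimpleGraph.mem_neighborSet,
    hC.apply_add_natCast_eq_iff c hk (by omega), hC.adj_add_natCast_iff c (by omega) hk]
  omega

theorem preimage_closedNbhd_trichotomy (hC : IsInducedCycle G f) (hG : Prereduced G)
    (hm : 10 < m) (v : V) :
    f ⁻¹' closedNbhd G v = ∅ ∨ f ⁻¹' closedNbhd G v = Set.univ ∨
      ∃ c : ZMod m, ∃ r : ℕ, r + 8 < m ∧
        f ⁻¹' closedNbhd G v = (fun k : ℕ => c + k) '' Set.Iic r := by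
  by_cases hv : v ∈ Set.range f
  · obtain ⟨i, rfl⟩ := hv
    have := hC.preimage_closedNbhd_apply_add_one (by omega) (i - 1)
    rw [Nat.cast_one, sub_add_cancel] at this
    exact Or.inr (Or.inr ⟨i - 1, 2, by omega, this⟩)
  have hpre : f ⁻¹' closedNbhd G v = {i | G.Adj v (f i)} := by
    ext i
    simp only [Set.mem_preimage, closedNbhd, Set.mem_insert_iff, SimpleGraph.mem_neighborSet,
      or_iff_right fun h => hv ⟨i, h⟩]
    rfl
  rw [hpre]
  by_cases hne : ∃ i, G.Adj v (f i)
  · by_cases hnu : ∃ i, ¬G.Adj v (f i)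
    · exact Or.inr (Or.inr (hC.exists_eq_arc_of_notMem_range hG hm hv hne hnu))
    · exact Or.inr (Or.inl (Set.eq_univ_of_forall fun i => not_not.1 (not_exists.1 hnu i)))
  · exact Or.inl (Set.eq_empty_of_forall_notMem (not_exists.1 hne))

end IsInducedCycle

end

theorem stmt_9_general {V : Type*} (G : SimpleGraph V) (hG : Prereduced G)
    (H : Set V) (hH : IsHole G H) (v : V) :
    ((closedNbhd G v ∩ H = ∅) ∨
      ∃ m : ℕ, 4 ≤ m ∧ ∃ f : ZMod m → V,
        Function.Injective f ∧ Set.range f = H ∧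
        (∀ i j : ZMod m, G.Adj (f i) (f j) ↔ (j = i + 1 ∨ i = j + 1)) ∧
        ∃ jmax : ℕ, jmax < m ∧
          closedNbhd G v ∩ H = f '' ((fun k : ℕ => (k : ZMod m)) '' Set.Iic jmax)) ∧
    (closedNbhd G v ∩ H = H ∨
      ((closedNbhd G v ∩ H).ncard : ℤ) < (H.ncard : ℤ) - 7) := by
  obtain ⟨m, hm4, f, hinj, rfl, hadj⟩ := hH
  have hC : IsInducedCycle G f := ⟨hinj, hadj⟩
  have hm := hC.ten_lt hG hm4
  have : NeZero m := ⟨by omega⟩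
  have hcard : (Set.range f).ncard = m := by
    rw [Set.ncard_range_of_injective hinj, Nat.card_zmod]
  have consecutive (c : ZMod m) (r : ℕ) (hr : r < m) :
      ∃ m : ℕ, 4 ≤ m ∧ ∃ g : ZMod m → V, Function.Injective g ∧ Set.range g = Set.range f ∧
        (∀ i j : ZMod m, G.Adj (g i) (g j) ↔ (j = i + 1 ∨ i = j + 1)) ∧
        ∃ jmax : ℕ, jmax < m ∧ f '' ((fun k : ℕ => c + k) '' Set.Iic r) =
          g '' ((fun k : ℕ => (k : ZMod m)) '' Set.Iic jmax) :=
    ⟨m, hm4, _, (hC.comp_add_left c).injective, (add_left_surjective c).range_comp f,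
      (hC.comp_add_left c).adj_iff, r, hr, by simp only [Set.image_image]⟩
  rw [← Set.image_preimage_eq_inter_range]
  rcases hC.preimage_closedNbhd_trichotomy hG hm v with h | h | ⟨c, r, hr, h⟩ <;> rw [h]
  · refine ⟨Or.inl (Set.image_empty f), Or.inr ?_⟩
    rw [Set.image_empty, Set.ncard_empty, hcard]
    omega
  · refine ⟨Or.inr ?_, Or.inl (Set.image_univ)⟩
    rw [ZMod.eq_image_add_natCast_Iic (s := Set.univ) 0 (r := m - 1) (by omega)
      fun k hk => by simp only [Set.mem_univ, true_iff]; omega]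
    exact consecutive 0 (m - 1) (by omega)
  · refine ⟨Or.inr (consecutive c r (by omega)), Or.inr ?_⟩
    rw [Set.ncard_image_of_injective _ hinj, ZMod.ncard_image_add_natCast_Iic c (by omega), hcard]
    omega

/-- In a prereduced graph, the closed neighborhood of any vertex in a hole
is consecutive in the hole, and is either the whole hole or has fewer than `|H| − 7`
vertices. -/
theorem stmt_9 {V : Type*} [Fintype V] (G : SimpleGraph V) (hG : Prereduced G)
    (H : Set V) (hH : IsHole G H) (v : V) :
    ((closedNbhd G v ∩ H = ∅) ∨
      ∃ m : ℕ, 4 ≤ m ∧ ∃ f : ZMod m → V,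
        Function.Injective f ∧ Set.range f = H ∧
        (∀ i j : ZMod m, G.Adj (f i) (f j) ↔ (j = i + 1 ∨ i = j + 1)) ∧
        ∃ jmax : ℕ, jmax < m ∧
          closedNbhd G v ∩ H = f '' ((fun k : ℕ => (k : ZMod m)) '' Set.Iic jmax)) ∧
    (closedNbhd G v ∩ H = H ∨
      ((closedNbhd G v ∩ H).ncard : ℤ) < (H.ncard : ℤ) - 7) :=
  stmt_9_general G hG H hH v
end

section
/- Let G be a finite prereduced graph, H a shortest hole of G (a hole of minimum cardinality among all holes of G), and v a vertex of G that is not a common neighbor of H. Then |N_H[v]| ≤ 3. -/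
/-!
If `v` lies on the hole `H`, then `N_H[v]` consists of `v` and its two neighbours on `H`.
Otherwise enumerate `H` cyclically by `ZMod m`. Whenever `v` sees `f i` and `f (i + d)` but none
of the `d - 1 ≥ 1` hole vertices strictly between them, `v` together with the arc
`f i, …, f (i + d)` is a hole on `d + 2` vertices, so `m ≤ d + 2` because `H` is shortest.
As `v` misses a vertex of `H`, such a gap exists, and all neighbours of `v` on `H` then lie
within the at most two remaining steps of the cycle.
-/

open Function Set

theorem Set.ncard_triple_le {α : Type*} (a b c : α) : ({a, b, c} : Set α).ncard ≤ 3 := by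
  classical
  rw [← Finset.coe_singleton, ← Finset.coe_insert, ← Finset.coe_insert, ncard_coe_finset]
  exact Finset.card_le_three

namespace ZMod

theorem eq_add_one_iff_val {k : ℕ} [NeZero k] (hk : 1 < k) (a b : ZMod k) :
    b = a + 1 ↔ b.val = a.val + 1 ∨ (b.val = 0 ∧ a.val + 1 = k) := by
  have : Fact (1 < k) := ⟨hk⟩
  rw [← (val_injective k).eq_iff, val_add, val_one]
  rcases (show a.val + 1 ≤ k from a.val_lt).lt_or_eq with h | h
  · rw [Nat.mod_eq_of_lt h]; omega
  · rw [h, Nat.mod_self]; have := b.val_lt; omega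

theorem eq_univ_of_add_one_mem {m : ℕ} [NeZero m] {S : Set (ZMod m)} {i₀ : ZMod m} (hi₀ : i₀ ∈ S)
    (hS : ∀ i ∈ S, i + 1 ∈ S) : S = univ := by
  have hiter : ∀ n : ℕ, i₀ + n ∈ S := by
    intro n
    induction n with
    | zero => simpa using hi₀
    | succ n ih => simpa [add_assoc] using hS _ ih
  refine eq_univ_of_forall fun j => ?_
  simpa using hiter (j - i₀).val

theorem ncard_le_three_of_gap {m : ℕ} [NeZero m] {S : Set (ZMod m)} (hS : S ≠ univ)
    (hgap : ∀ (i : ZMod m) (d : ℕ), i ∈ S → i + d ∈ S → 2 ≤ d →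
      (∀ t : ℕ, 0 < t → t < d → i + t ∉ S) → m ≤ d + 2) :
    S.ncard ≤ 3 := by
  rcases S.eq_empty_or_nonempty with rfl | ⟨i₀, hi₀⟩
  · simp
  obtain ⟨i, hi, hi1⟩ : ∃ i ∈ S, i + 1 ∉ S := by
    by_contra! h
    exact hS (eq_univ_of_add_one_mem hi₀ h)
  classical
  have hret : ∃ d : ℕ, 0 < d ∧ i + d ∈ S := ⟨m, NeZero.pos m, by simpa using hi⟩
  set d := Nat.find hret
  obtain ⟨hd0, hd⟩ : 0 < d ∧ i + d ∈ S := Nat.find_spec hret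
  have hmin : ∀ t : ℕ, 0 < t → t < d → i + t ∉ S := fun t ht htd hmem =>
    Nat.find_min hret htd ⟨ht, hmem⟩
  have hd2 : 2 ≤ d := by
    by_contra! h
    have hd1 : d = 1 := by omega
    exact hi1 (by simpa [hd1] using hd)
  have hmd := hgap i d hi hd hd2 hmin
  have hsub : S ⊆ {i, i - 1, i - 2} := by
    intro j hj
    obtain ⟨t, ht, rfl⟩ : ∃ t : ℕ, t < m ∧ j = i + t := ⟨(j - i).val, val_lt _, by simp⟩
    rcases Nat.eq_zero_or_pos t with rfl | ht0
    · simp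
    have hdt : d ≤ t := by
      by_contra! h
      exact hmin t ht0 h hj
    obtain ⟨s, hs, rfl⟩ : ∃ s, (s = 1 ∨ s = 2) ∧ t = m - s := ⟨m - t, by omega, by omega⟩
    have hcast : ((m - s : ℕ) : ZMod m) = -s := by
      rw [Nat.cast_sub (by omega), natCast_self, zero_sub]
    rcases hs with rfl | rfl <;> simp [hcast, sub_eq_add_neg]
  exact (ncard_le_ncard hsub (toFinite _)).trans (ncard_triple_le _ _ _)

end ZMod

section Holes

variable {V : Type*} {G : SimpleGraph V}

theorem isHole_insert_of_adj_iff_endpoint {n : ℕ} (hn : 2 ≤ n) {p : Fin (n + 1) → V}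
    (hp : Injective p)
    (hpadj : ∀ a b, G.Adj (p a) (p b) ↔ (a.val + 1 = b.val ∨ b.val + 1 = a.val))
    {v : V} (hv : v ∉ range p) (hvadj : ∀ a, G.Adj v (p a) ↔ (a.val = 0 ∨ a.val = n)) :
    IsHole G (insert v (range p)) := by
  let g : ZMod (n + 2) → V := fun t => if h : t.val < n + 1 then p ⟨t.val, h⟩ else v
  have hg_lt : ∀ t (h : t.val < n + 1), g t = p ⟨t.val, h⟩ := fun t h => dif_pos h
  have hg_last : ∀ t : ZMod (n + 2), ¬ t.val < n + 1 → g t = v := fun t h => dif_neg h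
  have hk : 1 < n + 2 := by omega
  refine ⟨n + 2, by omega, g, ?_, ?_, ?_⟩
  · intro a b hab
    apply ZMod.val_injective
    have ha := a.val_lt
    have hb := b.val_lt
    by_cases ha' : a.val < n + 1 <;> by_cases hb' : b.val < n + 1
    · rw [hg_lt a ha', hg_lt b hb'] at hab
      exact Fin.mk.inj_iff.mp (hp hab)
    · rw [hg_lt a ha', hg_last b hb'] at hab
      exact absurd ⟨_, hab⟩ hv
    · rw [hg_last a ha', hg_lt b hb'] at hab
      exact absurd ⟨_, hab.symm⟩ hv
    · omega
  · ext x
    constructor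
    · rintro ⟨t, rfl⟩
      by_cases ht : t.val < n + 1
      · exact Or.inr ⟨_, (hg_lt t ht).symm⟩
      · exact Or.inl (hg_last t ht)
    · rintro (rfl | ⟨a, rfl⟩)
      · refine ⟨(n + 1 : ℕ), hg_last _ ?_⟩
        rw [ZMod.val_cast_of_lt (by omega)]
        omega
      · have ha : ((a.val : ℕ) : ZMod (n + 2)).val = a.val := ZMod.val_cast_of_lt (by omega)
        refine ⟨a.val, ?_⟩
        rw [hg_lt _ (by omega)]
        simp only [ha]
  · intro a b
    have ha := a.val_lt
    have hb := b.val_lt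
    rw [ZMod.eq_add_one_iff_val hk, ZMod.eq_add_one_iff_val hk]
    by_cases ha' : a.val < n + 1 <;> by_cases hb' : b.val < n + 1
    · rw [hg_lt a ha', hg_lt b hb', hpadj]
      dsimp only
      omega
    · rw [hg_lt a ha', hg_last b hb', G.adj_comm, hvadj]
      dsimp only
      omega
    · rw [hg_last a ha', hg_lt b hb', hvadj]
      dsimp only
      omega
    · rw [hg_last a ha', hg_last b hb']
      simp only [SimpleGraph.irrefl, false_iff]
      omega

end Holes

section CycleMap

variable {V : Type*} {G : SimpleGraph V} {m : ℕ} {f : ZMod m → V}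

theorem injective_arc (hf : Injective f) (i : ZMod m) {n : ℕ} (hnm : n < m) :
    Injective fun a : Fin (n + 1) => f (i + a.val) := by
  intro a b hab
  have hab' := add_left_cancel (hf hab)
  rw [ZMod.natCast_eq_natCast_iff', Nat.mod_eq_of_lt (by omega), Nat.mod_eq_of_lt (by omega)]
    at hab'
  exact Fin.ext hab'

theorem adj_arc_iff (hfadj : ∀ i j, G.Adj (f i) (f j) ↔ (j = i + 1 ∨ i = j + 1))
    (i : ZMod m) {n : ℕ} (hnm : n + 1 < m) (a b : Fin (n + 1)) :
    G.Adj (f (i + a.val)) (f (i + b.val)) ↔ (a.val + 1 = b.val ∨ b.val + 1 = a.val) := by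
  have : NeZero m := ⟨by omega⟩
  have hval : ∀ c : Fin (n + 1), ((c.val : ℕ) : ZMod m).val = c.val := fun c =>
    ZMod.val_cast_of_lt (by omega)
  rw [hfadj, add_assoc, add_assoc, add_right_inj, add_right_inj,
    ZMod.eq_add_one_iff_val (by omega), ZMod.eq_add_one_iff_val (by omega), hval, hval]
  omega

theorem exists_isHole_ncard_of_apex (hf : Injective f)
    (hfadj : ∀ i j, G.Adj (f i) (f j) ↔ (j = i + 1 ∨ i = j + 1)) {v : V} (hv : v ∉ range f)
    (i : ZMod m) {d : ℕ} (hd : 2 ≤ d) (hdm : d + 1 < m)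
    (hvadj : ∀ t ≤ d, G.Adj v (f (i + t)) ↔ (t = 0 ∨ t = d)) :
    ∃ H, IsHole G H ∧ H.ncard = d + 2 := by
  have hp := injective_arc hf i (n := d) (by omega)
  have hvp : v ∉ range fun a : Fin (d + 1) => f (i + a.val) := fun ⟨a, ha⟩ => hv ⟨_, ha⟩
  refine ⟨_, isHole_insert_of_adj_iff_endpoint hd hp (adj_arc_iff hfadj i hdm) hvp
    fun a => hvadj a.val (by omega), ?_⟩
  rw [ncard_insert_of_notMem hvp, ncard_range_of_injective hp, Nat.card_eq_fintype_card,
    Fintype.card_fin]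

theorem ncard_adj_le_three_of_shortest [NeZero m] (hf : Injective f)
    (hfadj : ∀ i j, G.Adj (f i) (f j) ↔ (j = i + 1 ∨ i = j + 1))
    (hshort : ∀ H, IsHole G H → m ≤ H.ncard) {v : V} (hv : v ∉ range f)
    (hnot : ∃ j, ¬ G.Adj v (f j)) :
    {j | G.Adj v (f j)}.ncard ≤ 3 := by
  refine ZMod.ncard_le_three_of_gap (fun h => ?_) fun i d hi hid hd hmin => ?_
  · obtain ⟨j, hj⟩ := hnot
    exact hj (eq_univ_iff_forall.mp h j)
  by_contra! hdm
  have hvadj : ∀ t ≤ d, G.Adj v (f (i + t)) ↔ (t = 0 ∨ t = d) := by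
    intro t ht
    constructor
    · intro hadj
      by_contra! h
      exact hmin t (by omega) (by omega) hadj
    · rintro (rfl | rfl)
      · simpa using hi
      · exact hid
  obtain ⟨H, hH, hcard⟩ := exists_isHole_ncard_of_apex hf hfadj hv i hd (by omega) hvadj
  have := hshort H hH
  omega

end CycleMap

theorem ncard_closedNbhd_inter_le_three_of_mem {V : Type*} {G : SimpleGraph V} {H : Set V}
    (hH : IsHole G H) {v : V} (hv : v ∈ H) :
    (closedNbhd G v ∩ H).ncard ≤ 3 := by
  obtain ⟨m, -, f, -, rfl, hfadj⟩ := hH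
  obtain ⟨i, rfl⟩ := hv
  have hsub : closedNbhd G (f i) ∩ range f ⊆ {f (i - 1), f i, f (i + 1)} := by
    rintro _ ⟨hx, j, rfl⟩
    rcases hx with h | h
    · simp [h]
    rcases (hfadj i j).mp h with rfl | rfl <;> simp
  exact (ncard_le_ncard hsub (toFinite _)).trans (Set.ncard_triple_le _ _ _)

theorem stmt_10_general {V : Type*} (G : SimpleGraph V)
    (H : Set V) (hH : IsHole G H)
    (hshort : ∀ H' : Set V, IsHole G H' → H.ncard ≤ H'.ncard)
    (v : V) (hv : v ∉ commonNbrs G H) :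
    (closedNbhd G v ∩ H).ncard ≤ 3 := by
  by_cases hvH : v ∈ H
  · exact ncard_closedNbhd_inter_le_three_of_mem hH hvH
  obtain ⟨m, hm, f, hf, rfl, hfadj⟩ := hH
  have : NeZero m := ⟨by omega⟩
  rw [ncard_range_of_injective hf, Nat.card_zmod] at hshort
  obtain ⟨j, hj⟩ : ∃ j, ¬ G.Adj v (f j) := by simpa [commonNbrs] using hv
  have himage : closedNbhd G v ∩ range f = f '' {j | G.Adj v (f j)} := by
    ext x
    constructor
    · rintro ⟨rfl | hx, j, rfl⟩
      · exact absurd ⟨j, rfl⟩ hvH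
      · exact ⟨j, hx, rfl⟩
    · rintro ⟨j, hj, rfl⟩
      exact ⟨Or.inr hj, j, rfl⟩
  rw [himage, ncard_image_of_injective _ hf]
  exact ncard_adj_le_three_of_shortest hf hfadj hshort hvH ⟨j, hj⟩

/-- In a prereduced graph, a vertex that is not a common neighbor of a
shortest hole `H` has at most 3 closed neighbors in `H`. -/
theorem stmt_10 {V : Type*} [Fintype V] (G : SimpleGraph V) (hG : Prereduced G)
    (H : Set V) (hH : IsHole G H)
    (hshort : ∀ H' : Set V, IsHole G H' → H.ncard ≤ H'.ncard)
    (v : V) (hv : v ∉ commonNbrs G H) :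
    (closedNbhd G v ∩ H).ncard ≤ 3 :=
  stmt_10_general G H hH hshort v hv
end
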